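/- arXiv:2409.01663 — 5 statements merged into one kernel-verified Lean document; each statement's English description precedes it below -/
import Mathlib

section
/- For every real r > 0, the function \tilde{F}(r) := -e^{8r} - 16r^2 e^{6r} + 8r e^{6r} + 16r^2 e^{4r} + 2e^{4r} - 16r^2 e^{2r} - 8r e^{2r} - 1 satisfies \tilde{F}''''(r) < 0. -/
noncomputable def Ftilde : ℝ → ℝ := fun r =>
  -Real.exp (8*r) - 16*r^2*Real.exp (6*r) + 8*r*Real.exp (6*r) + 16*r^2*Real.exp (4*r)
    + 2*Real.exp (4*r) - 16*r^2*Real.exp (2*r) - 8*r*Real.exp (2*r) - 1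

/-!
Each term of `Ftilde` has the form `(a r² + b r + c) e^{k r}`, a shape preserved by `d/dr`
(it acts linearly on the coefficients `(a, b, c)`), so the fourth derivative is computed
mechanically. It factors as `-128 e^{2r} P(r, e^{2r})` with `P` a cubic in `y = e^{2r} ≥ 1`
that is positive term by term: `32 y³ > 28 y`, `(162 r² + 135 r) y² ≥ (32 r² + 64 r) y`,
and the constant term is positive.
-/

open Real

noncomputable def quadExp (a b c k r : ℝ) : ℝ := (a * r ^ 2 + b * r + c) * exp (k * r)

section quadExp

variable (a b c k : ℝ)

theorem hasDerivAt_quadExp (r : ℝ) :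
    HasDerivAt (quadExp a b c k) (quadExp (k * a) (2 * a + k * b) (b + k * c) k r) r := by
  have hp : HasDerivAt (fun r : ℝ => a * r ^ 2 + b * r + c) (2 * a * r + b) r :=
    ((((hasDerivAt_pow 2 r).const_mul a).add ((hasDerivAt_id' r).const_mul b)).add_const c
      ).congr_deriv (by push_cast; ring)
  have he : HasDerivAt (fun r : ℝ => exp (k * r)) (exp (k * r) * k) r :=
    ((hasDerivAt_id' r).const_mul k).exp.congr_deriv (by ring)
  exact (hp.mul he).congr_deriv (by unfold quadExp; ring)

theorem deriv_quadExp :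
    deriv (quadExp a b c k) = quadExp (k * a) (2 * a + k * b) (b + k * c) k :=
  funext fun r => (hasDerivAt_quadExp a b c k r).deriv

@[fun_prop]
theorem contDiff_quadExp {n : WithTop ℕ∞} : ContDiff ℝ n (fun r => quadExp a b c k r) := by
  unfold quadExp; fun_prop

end quadExp

theorem Ftilde_eq_sum_quadExp :
    Ftilde = fun r => quadExp 0 0 (-1) 8 r + quadExp (-16) 8 0 6 r + quadExp 16 0 2 4 r
      + quadExp (-16) (-8) 0 2 r + quadExp 0 0 (-1) 0 r := by
  funext r
  simp only [Ftilde, quadExp, zero_mul, exp_zero]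
  ring

theorem iteratedDeriv_four_Ftilde (r : ℝ) :
    iteratedDeriv 4 Ftilde r = -128 * exp (2 * r) * (32 * exp (2 * r) ^ 3
      + (162 * r ^ 2 + 135 * r) * exp (2 * r) ^ 2 - (32 * r ^ 2 + 64 * r + 28) * exp (2 * r)
      + (2 * r ^ 2 + 9 * r + 8)) := by
  rw [Ftilde_eq_sum_quadExp]
  simp (disch := fun_prop) only [iteratedDeriv_fun_add]
  simp only [iteratedDeriv_succ', iteratedDeriv_zero, deriv_quadExp, quadExp]
  have h8 : exp (8 * r) = exp (2 * r) ^ 4 := by rw [← exp_nat_mul]; ring_nf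
  have h6 : exp (6 * r) = exp (2 * r) ^ 3 := by rw [← exp_nat_mul]; ring_nf
  have h4 : exp (4 * r) = exp (2 * r) ^ 2 := by rw [← exp_nat_mul]; ring_nf
  norm_num [h8, h6, h4]
  ring

theorem cubic_pos_of_nonneg_of_one_le {r y : ℝ} (hr : 0 ≤ r) (hy : 1 ≤ y) :
    0 < 32 * y ^ 3 + (162 * r ^ 2 + 135 * r) * y ^ 2 - (32 * r ^ 2 + 64 * r + 28) * y
      + (2 * r ^ 2 + 9 * r + 8) := by
  have hy0 : 0 ≤ y := zero_le_one.trans hy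
  have hcube : 28 * y < 32 * y ^ 3 := by
    nlinarith [mul_le_mul_of_nonneg_left (one_le_pow₀ (n := 2) hy) hy0]
  have hsq : (32 * r ^ 2 + 64 * r) * y ≤ (162 * r ^ 2 + 135 * r) * y ^ 2 := by
    have hcoef : 32 * r ^ 2 + 64 * r ≤ (162 * r ^ 2 + 135 * r) * y := by nlinarith
    nlinarith [mul_le_mul_of_nonneg_right hcoef hy0]
  nlinarith

theorem Ftilde_fourth_deriv_neg :
    ∀ r : ℝ, 0 < r → iteratedDeriv 4 Ftilde r < 0 := by
  intro r hr
  rw [iteratedDeriv_four_Ftilde]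
  have hexp : -128 * exp (2 * r) < 0 := by linarith [exp_pos (2 * r)]
  exact mul_neg_of_neg_of_pos hexp
    (cubic_pos_of_nonneg_of_one_le hr.le (one_le_exp (by positivity)))
end

section
/- For every real r > 0, \tilde{F}(r) < 0, where \tilde{F}(r) := -e^{8r} - 16r^2 e^{6r} + 8r e^{6r} + 16r^2 e^{4r} + 2e^{4r} - 16r^2 e^{2r} - 8r e^{2r} - 1. -/
theorem Ftilde_neg : ∀ r : ℝ, 0 < r → Ftilde r < 0 := by
  intro r hr
  set x := Real.exp (2*r) with hxdef
  have hx1 : 1 < x := by rw [hxdef, show (1:ℝ) = Real.exp 0 from (Real.exp_zero).symm]; exact Real.exp_lt_exp.mpr (by linarith)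
  have h4 : Real.exp (4*r) = x^2 := by
    rw [show (4:ℝ)*r = 2*r + 2*r by ring, Real.exp_add]; ring
  have h6 : Real.exp (6*r) = x^3 := by
    rw [show (6:ℝ)*r = 2*r + (2*r + 2*r) by ring, Real.exp_add, Real.exp_add]; ring
  have h8 : Real.exp (8*r) = x^4 := by
    rw [show (8:ℝ)*r = 2*r + (2*r + (2*r + 2*r)) by ring, Real.exp_add, Real.exp_add,
      Real.exp_add]; ring
  have key : Ftilde r = -((x^2-1) - 4*r*x)^2 - 16*r^2*x*(x-1)^2 := by
    simp only [Ftilde, h4, h6, h8]; ring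
  rw [key]
  nlinarith [sq_nonneg ((x^2-1) - 4*r*x), sq_nonneg (x-1), mul_pos hr hr,
    mul_pos (mul_pos (mul_pos hr hr) (by linarith : (0:ℝ) < x))
      (mul_pos (by linarith : (0:ℝ) < x-1) (by linarith : (0:ℝ) < x-1))]
end

section
/- The function F : (0,\infty) \to \mathbb{R}, F(r) = \sqrt{r \tanh r}, is strictly concave; equivalently, F''(r) < 0 for all r > 0. -/
/-
With `g r = r tanh r` one has `F = √g` and `F'' = (2 g g'' - g'²) / (4 g √g)`, so concavity amounts to
`2 g g'' < g'²`. Writing `t = tanh r`, `u = 1 - t²`, we have `g' = t + r u` and `g'' = 2 u (1 - r t)`, and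
`g'² - 2 g g'' = (t - r u)² + 4 r² t² u`, which is positive because `0 < u` and `r t ≠ 0`.
-/

noncomputable def Fsw : ℝ → ℝ := fun r => Real.sqrt (r * Real.tanh r)

open Real Filter Topology

theorem Real.hasDerivAt_tanh (x : ℝ) : HasDerivAt tanh (1 - tanh x ^ 2) x := by
  have h : HasDerivAt (fun y => sinh y / cosh y) ((cosh x * cosh x - sinh x * sinh x) / cosh x ^ 2) x :=
    (hasDerivAt_sinh x).div (hasDerivAt_cosh x) (cosh_pos x).ne'
  simp only [← tanh_eq_sinh_div_cosh] at h
  refine h.congr_deriv ?_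
  rw [tanh_eq_sinh_div_cosh]
  field_simp

theorem Real.continuous_tanh : Continuous tanh :=
  continuous_iff_continuousAt.2 fun x => (hasDerivAt_tanh x).continuousAt

theorem Real.tanh_pos {x : ℝ} (hx : 0 < x) : 0 < tanh x := by
  rw [tanh_eq_sinh_div_cosh]
  exact div_pos (sinh_pos_iff.2 hx) (cosh_pos x)

theorem hasDerivAt_deriv_sqrt_comp {g g' : ℝ → ℝ} {g'' x : ℝ}
    (hg : ∀ᶠ y in 𝓝 x, HasDerivAt g (g' y) y) (hgx : 0 < g x) (hg' : HasDerivAt g' g'' x) :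
    HasDerivAt (deriv fun y => √(g y)) ((2 * g x * g'' - g' x ^ 2) / (4 * g x * √(g x))) x := by
  have hg_ne : ∀ᶠ y in 𝓝 x, g y ≠ 0 :=
    hg.self_of_nhds.continuousAt.eventually_ne hgx.ne'
  have hderiv : (deriv fun y => √(g y)) =ᶠ[𝓝 x] fun y => g' y / (2 * √(g y)) := by
    filter_upwards [hg, hg_ne] with y hy hy0
    exact (hy.sqrt hy0).deriv
  have hs : 0 < √(g x) := sqrt_pos.2 hgx
  refine ((hg'.div ((hg.self_of_nhds.sqrt hgx.ne').const_mul 2) (by positivity)).congr_of_eventuallyEq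
    hderiv).congr_deriv ?_
  field_simp
  rw [sq_sqrt hgx.le]
  ring

theorem hasDerivAt_mul_tanh (x : ℝ) :
    HasDerivAt (fun y => y * tanh y) (tanh x + x * (1 - tanh x ^ 2)) x :=
  ((hasDerivAt_id' x).mul (hasDerivAt_tanh x)).congr_deriv (by ring)

theorem hasDerivAt_tanh_add_mul_one_sub_tanh_sq (x : ℝ) :
    HasDerivAt (fun y => tanh y + y * (1 - tanh y ^ 2))
      (2 * (1 - tanh x ^ 2) * (1 - x * tanh x)) x :=
  ((hasDerivAt_tanh x).add ((hasDerivAt_id' x).mul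
    (((hasDerivAt_tanh x).fun_pow 2).const_sub 1))).congr_deriv (by ring)

theorem two_mul_mul_lt_sq_of_sq_lt_one {r t : ℝ} (hrt : 0 < r * t) (ht : t ^ 2 < 1) :
    2 * (r * t) * (2 * (1 - t ^ 2) * (1 - r * t)) < (t + r * (1 - t ^ 2)) ^ 2 := by
  have hu : 0 < 1 - t ^ 2 := sub_pos.2 ht
  have hgap : 0 < (t - r * (1 - t ^ 2)) ^ 2 + 4 * (r * t) ^ 2 * (1 - t ^ 2) := by positivity
  linarith [show (t + r * (1 - t ^ 2)) ^ 2 - 2 * (r * t) * (2 * (1 - t ^ 2) * (1 - r * t)) =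
    (t - r * (1 - t ^ 2)) ^ 2 + 4 * (r * t) ^ 2 * (1 - t ^ 2) by ring]

theorem Fsw_strictConcave :
    StrictConcaveOn ℝ (Set.Ioi (0:ℝ)) Fsw ∧
      ∀ r : ℝ, 0 < r → iteratedDeriv 2 Fsw r < 0 := by
  have hderiv2 : ∀ r : ℝ, 0 < r → iteratedDeriv 2 Fsw r < 0 := by
    intro r hr
    have hg : 0 < r * tanh r := mul_pos hr (tanh_pos hr)
    have h := hasDerivAt_deriv_sqrt_comp (.of_forall hasDerivAt_mul_tanh) hg
      (hasDerivAt_tanh_add_mul_one_sub_tanh_sq r)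
    rw [iteratedDeriv_succ, iteratedDeriv_one]
    unfold Fsw
    rw [h.deriv]
    refine div_neg_of_neg_of_pos ?_ (by positivity)
    linarith [two_mul_mul_lt_sq_of_sq_lt_one hg (tanh_sq_lt_one r)]
  refine ⟨strictConcaveOn_of_deriv2_neg (convex_Ioi 0) ?_ fun r hr => ?_, hderiv2⟩
  · exact (continuous_sqrt.comp (continuous_id.mul continuous_tanh)).continuousOn
  · rw [interior_Ioi] at hr
    simpa only [iteratedDeriv_eq_iterate] using hderiv2 r hr
end

section
/- The function r \mapsto \sqrt{r \tanh r} on [0,\infty) possesses an extension F : \mathbb{R} \to \mathbb{R} that is real-analytic, strictly increasing, and odd. -/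
/-!
The function `tanh r / r` extends across `0` to the difference quotient `dslope tanh 0`, which is
analytic (as `tanh` is), even and positive (as `tanh` is odd and strictly increasing). Hence
`F r = r * √(tanh r / r)` is analytic and odd, and equals `√(r * tanh r)` for `r ≥ 0`. There it
is strictly increasing because `r * tanh r` is, and oddness propagates this to all of `ℝ`.
-/

open Real Set

section dslope

variable {𝕜 E : Type*} [NontriviallyNormedField 𝕜] [NormedAddCommGroup E] [NormedSpace 𝕜 E]

theorem AnalyticOnNhd.dslope {f : 𝕜 → E} {s : Set 𝕜} {a : 𝕜} (hf : AnalyticOnNhd 𝕜 f s)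
    (ha : a ∈ s) : AnalyticOnNhd 𝕜 (dslope f a) s := by
  intro x hx
  rcases eq_or_ne x a with rfl | hxa
  · obtain ⟨p, hp⟩ := hf x hx
    exact ⟨p.fslope, hp.has_fpower_series_dslope_fslope⟩
  · have hslope : AnalyticAt 𝕜 (fun y => (y - a)⁻¹ • (f y - f a)) x :=
      ((analyticAt_id.sub analyticAt_const).inv (sub_ne_zero.2 hxa)).smul
        ((hf x hx).sub analyticAt_const)
    exact hslope.congr (dslope_eventuallyEq_slope_of_ne f hxa).symm

end dslope

theorem StrictMono.slope_pos {𝕜 : Type*} [Field 𝕜] [LinearOrder 𝕜] [IsStrictOrderedRing 𝕜]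
    {f : 𝕜 → 𝕜} (hf : StrictMono f) {a b : 𝕜} (hab : a ≠ b) : 0 < slope f a b := by
  rw [slope_def_field]
  rcases hab.lt_or_gt with h | h
  · exact div_pos (sub_pos.2 (hf h)) (sub_pos.2 h)
  · exact div_pos_of_neg_of_neg (sub_neg.2 (hf h)) (sub_neg.2 h)

namespace Real

theorem analyticAt_tanh (x : ℝ) : AnalyticAt ℝ tanh x := by
  rw [show tanh = fun y => sinh y / cosh y from funext tanh_eq_sinh_div_cosh]
  exact analyticAt_sinh.div analyticAt_cosh (cosh_pos x).ne'

theorem hasDerivAt_tanh_s5 (x : ℝ) : HasDerivAt tanh (1 / cosh x ^ 2) x := by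
  have h := (hasDerivAt_sinh x).div (hasDerivAt_cosh x) (cosh_pos x).ne'
  rw [show sinh / cosh = tanh from funext fun y => (tanh_eq_sinh_div_cosh y).symm] at h
  refine h.congr_deriv ?_
  rw [← cosh_sq_sub_sinh_sq x]
  ring

theorem strictMono_tanh : StrictMono tanh := by
  intro a b hab
  rw [tanh_eq_sinh_div_cosh, tanh_eq_sinh_div_cosh,
    div_lt_div_iff₀ (cosh_pos a) (cosh_pos b)]
  have h : 0 < sinh (b - a) := sinh_pos_iff.2 (sub_pos.2 hab)
  rw [sinh_sub] at h
  linarith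

theorem tanh_nonneg {x : ℝ} (hx : 0 ≤ x) : 0 ≤ tanh x :=
  tanh_zero ▸ strictMono_tanh.monotone hx

theorem strictMonoOn_mul_tanh : StrictMonoOn (fun r => r * tanh r) (Ici 0) :=
  fun _ ha _ _ hab => mul_lt_mul'' hab (strictMono_tanh hab) ha (tanh_nonneg ha)

noncomputable def tanhSlope : ℝ → ℝ := dslope tanh 0

theorem tanhSlope_of_ne_zero {x : ℝ} (hx : x ≠ 0) : tanhSlope x = tanh x / x := by
  rw [tanhSlope, dslope_of_ne _ hx, slope_def_field, tanh_zero, sub_zero, sub_zero]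

theorem tanhSlope_pos (x : ℝ) : 0 < tanhSlope x := by
  rcases eq_or_ne x 0 with rfl | hx
  · simp [tanhSlope, dslope_same, (hasDerivAt_tanh_s5 0).deriv]
  · rw [tanhSlope, dslope_of_ne _ hx]
    exact strictMono_tanh.slope_pos hx.symm

theorem tanhSlope_neg (x : ℝ) : tanhSlope (-x) = tanhSlope x := by
  rcases eq_or_ne x 0 with rfl | hx
  · rw [neg_zero]
  · rw [tanhSlope_of_ne_zero (neg_ne_zero.2 hx), tanhSlope_of_ne_zero hx, tanh_neg,
      neg_div_neg_eq]

theorem analyticAt_tanhSlope (x : ℝ) : AnalyticAt ℝ tanhSlope x :=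
  (AnalyticOnNhd.dslope (fun y _ => analyticAt_tanh y) (mem_univ 0)) x (mem_univ x)

theorem mul_sqrt_tanhSlope {r : ℝ} (hr : 0 ≤ r) : r * √(tanhSlope r) = √(r * tanh r) := by
  rcases hr.eq_or_lt with rfl | hr
  · simp
  · rw [tanhSlope_of_ne_zero hr.ne', show r * tanh r = r ^ 2 * (tanh r / r) by field_simp,
      sqrt_mul (sq_nonneg r), sqrt_sq hr.le]

end Real

theorem exists_analytic_odd_extension :
    ∃ F : ℝ → ℝ,
      (∀ r : ℝ, 0 ≤ r → F r = Real.sqrt (r * Real.tanh r)) ∧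
      AnalyticOn ℝ F Set.univ ∧
      StrictMono F ∧
      (∀ r : ℝ, F (-r) = -F r) := by
  set F : ℝ → ℝ := fun r => r * √(tanhSlope r)
  have hF : ∀ r, 0 ≤ r → F r = √(r * tanh r) := fun r hr => mul_sqrt_tanhSlope hr
  have hodd : ∀ r, F (-r) = -F r := fun r => by simp only [F, tanhSlope_neg, neg_mul]
  have hanalytic : AnalyticOn ℝ F univ := fun x _ =>
    (analyticAt_id.mul ((contDiffAt_sqrt (tanhSlope_pos x).ne').analyticAt.comp
      (analyticAt_tanhSlope x))).analyticWithinAt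
  have hmono : StrictMonoOn F (Ici 0) := fun a ha b hb hab => by
    rw [hF a ha, hF b hb]
    exact sqrt_lt_sqrt (mul_nonneg ha (tanh_nonneg ha)) (strictMonoOn_mul_tanh ha hb hab)
  exact ⟨F, hF, hanalytic, strictMono_of_odd_strictMonoOn_nonneg hodd hmono, hodd⟩
end

section
/- Fix \kappa > 0 and \mu_0 = \kappa/\tanh\kappa. If n \in \mathbb{Z} and the sign \# \in \{+,-\} satisfy (n,\#) \notin \{(0,+),(0,-),(1,-),(-1,+)\}, then \lambda^{\#}_{n,0,0} \neq 0, where \lambda^{\pm}_{n,0,0} = i\big(n\kappa \pm \sqrt{\mu_0\,|n\kappa|\tanh|n\kappa|}\big). -/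
lemma tanh_add_lt (a b : ℝ) (ha : 0 < a) (hb : 0 < b) :
    Real.tanh (a + b) < Real.tanh a + Real.tanh b := by
  rw [Real.tanh_eq_sinh_div_cosh, Real.tanh_eq_sinh_div_cosh, Real.tanh_eq_sinh_div_cosh,
    div_add_div _ _ (ne_of_gt (Real.cosh_pos a)) (ne_of_gt (Real.cosh_pos b)),
    div_lt_div_iff₀ (Real.cosh_pos _) (by positivity)]
  rw [Real.sinh_add, Real.cosh_add]
  have hsa := Real.sinh_pos_iff.2 ha
  have hsb := Real.sinh_pos_iff.2 hb
  have hca := Real.cosh_pos a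
  have hcb := Real.cosh_pos b
  nlinarith [mul_pos (by positivity : (0:ℝ) < Real.sinh a * Real.cosh b + Real.cosh a * Real.sinh b) (mul_pos hsa hsb)]

lemma tanh_nat_mul_lt (κ : ℝ) (hκ : 0 < κ) : ∀ m : ℕ, 2 ≤ m →
    Real.tanh ((m : ℝ) * κ) < (m : ℝ) * Real.tanh κ := by
  intro m hm
  induction m with
  | zero => omega
  | succ k ih =>
    rcases Nat.lt_or_ge k 2 with hk | hk
    · interval_cases k
      · omega
      · have := tanh_add_lt κ κ hκ hκ
        push_cast
        calc Real.tanh (2 * κ) = Real.tanh (κ + κ) := by ring_nf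
        _ < Real.tanh κ + Real.tanh κ := this
        _ = 2 * Real.tanh κ := by ring
    · have h1 : Real.tanh ((k:ℝ)*κ + κ) < Real.tanh ((k:ℝ)*κ) + Real.tanh κ :=
        tanh_add_lt _ _ (by positivity) hκ
      have h2 := ih hk
      push_cast
      calc Real.tanh (((k:ℝ)+1) * κ) = Real.tanh ((k:ℝ)*κ + κ) := by ring_nf
      _ < Real.tanh ((k:ℝ)*κ) + Real.tanh κ := h1
      _ < (k:ℝ) * Real.tanh κ + Real.tanh κ := by linarith
      _ = ((k:ℝ)+1) * Real.tanh κ := by ring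

theorem other_eigenvalues_nonzero (κ : ℝ) (hκ : 0 < κ) (μ0 : ℝ)
    (hμ0 : μ0 = κ / Real.tanh κ) (n : ℤ) (s : ℝ) (hs : s = 1 ∨ s = -1)
    (hexc : ¬(n = 0 ∧ s = 1) ∧ ¬(n = 0 ∧ s = -1) ∧ ¬(n = 1 ∧ s = -1) ∧ ¬(n = -1 ∧ s = 1)) :
    Complex.I * (((n : ℝ) * κ +
        s * Real.sqrt (μ0 * |(n : ℝ) * κ| * Real.tanh |(n : ℝ) * κ|) : ℝ)) ≠ 0 := by
  obtain ⟨h1, h2, h3, h4⟩ := hexc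
  have hn0 : n ≠ 0 := by rcases hs with rfl | rfl
                         · exact fun h => h1 ⟨h, rfl⟩
                         · exact fun h => h2 ⟨h, rfl⟩
  -- reduce to real part nonzero
  set r : ℝ := |(n : ℝ) * κ| with hr
  have hrpos : 0 < r := by
    have : ((n:ℝ)) ≠ 0 := Int.cast_ne_zero.2 hn0
    positivity
  have htanhκ : 0 < Real.tanh κ := by
    rw [Real.tanh_eq_sinh_div_cosh]
    exact div_pos (Real.sinh_pos_iff.2 hκ) (Real.cosh_pos κ)
  have htanhr : 0 < Real.tanh r := by
    rw [Real.tanh_eq_sinh_div_cosh]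
    exact div_pos (Real.sinh_pos_iff.2 hrpos) (Real.cosh_pos r)
  have hμ0pos : 0 < μ0 := by rw [hμ0]; positivity
  have hx : ((n : ℝ) * κ + s * Real.sqrt (μ0 * r * Real.tanh r)) ≠ 0 := by
    have hsq : 0 ≤ Real.sqrt (μ0 * r * Real.tanh r) := Real.sqrt_nonneg _
    have hsqpos : 0 < Real.sqrt (μ0 * r * Real.tanh r) :=
      Real.sqrt_pos.2 (by positivity)
    -- key bound for |n| ≥ 2
    have key : 2 ≤ |n| → Real.sqrt (μ0 * r * Real.tanh r) < r := by
      intro hn2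
      have hreq : r = (|n|.toNat : ℝ) * κ := by
        rw [hr, abs_mul, abs_of_pos hκ]
        congr 1
        rw [← Int.cast_abs]
        norm_cast
        omega
      have hm : 2 ≤ |n|.toNat := by omega
      have hmain : Real.tanh r < (|n|.toNat : ℝ) * Real.tanh κ := by
        rw [hreq]; exact tanh_nat_mul_lt κ hκ _ hm
      have hlt : μ0 * r * Real.tanh r < r ^ 2 := by
        rw [hμ0, div_mul_eq_mul_div, div_mul_eq_mul_div, div_lt_iff₀ htanhκ]
        have : κ * Real.tanh r < r * Real.tanh κ := by
          rw [hreq]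
          calc κ * Real.tanh ((|n|.toNat : ℝ) * κ) < κ * ((|n|.toNat : ℝ) * Real.tanh κ) := by
                exact (mul_lt_mul_iff_right₀ hκ).2 (by rw [← hreq]; exact hmain)
          _ = (|n|.toNat : ℝ) * κ * Real.tanh κ := by ring
        nlinarith [hrpos]
      calc Real.sqrt (μ0 * r * Real.tanh r) < Real.sqrt (r ^ 2) :=
            Real.sqrt_lt_sqrt (by positivity) hlt
      _ = r := by rw [Real.sqrt_sq hrpos.le]
    rcases hs with rfl | rfl
    · -- s = 1, n ≠ 0, n ≠ -1
      rcases lt_or_gt_of_ne (Int.cast_ne_zero.2 hn0 : ((n:ℝ)) ≠ 0) with hneg | hpos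
      · -- n ≤ -2
        have hn2 : 2 ≤ |n| := by
          have : n < 0 := by exact_mod_cast hneg
          have : n ≠ -1 := fun h => h4 ⟨h, rfl⟩
          rcases abs_cases n with ⟨h,_⟩|⟨h,_⟩ <;> omega
        have hk := key hn2
        have hrval : r = -((n:ℝ) * κ) := by
          rw [hr, abs_of_neg (by nlinarith)]
        intro h
        rw [one_mul] at h
        nlinarith [hk, hrval]
      · have : 0 < (n:ℝ) * κ := by positivity
        nlinarith [hsqpos]
    · -- s = -1, n ≠ 0, n ≠ 1
      rcases lt_or_gt_of_ne (Int.cast_ne_zero.2 hn0 : ((n:ℝ)) ≠ 0) with hneg | hpos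
      · have : (n:ℝ) * κ < 0 := by
          have : (n:ℝ) < 0 := hneg
          nlinarith
        nlinarith [hsqpos]
      · have hn2 : 2 ≤ |n| := by
          have : 0 < n := by exact_mod_cast hpos
          have : n ≠ 1 := fun h => h3 ⟨h, rfl⟩
          rcases abs_cases n with ⟨h,_⟩|⟨h,_⟩ <;> omega
        have hk := key hn2
        have hrval : r = (n:ℝ) * κ := by
          rw [hr, abs_of_pos (by positivity)]
        intro h
        nlinarith [hk, hrval]
  intro h
  apply hx
  have := mul_eq_zero.1 h
  rcases this with hI | h0
  · exact absurd hI Complex.I_ne_zero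
  · exact_mod_cast h0
end
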